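/- (Lemma 1, unbounded path loss model.) Let M ≥ 2 be an integer, let λ, ρ, D > 0 and α > 2. On a probability space, let N be Poisson distributed with mean λπD², and let (R_i, E_i, S_i)_{i∈ℕ} be i.i.d. random triples, independent of N, such that for each i the coordinates R_i, E_i, S_i are mutually independent, R_i has cumulative distribution function r ↦ (r/D)² on [0, D], E_i has the exponential distribution with rate 1, and S_i has the Gamma distribution with shape M−1 and rate 1. Define γ_i = E_i / ( R_i^α / ρ + S_i ). Then for every x > 0, P( {ω : for all i < N(ω), γ_i(ω) ≤ x} ) = exp( −(2λπ/α) (x+1)^{1−M} (ρ/x)^{2/α} γ_inc(2/α, x D^α / ρ) ), where γ_inc(s, X) := ∫_0^X u^{s−1} e^{−u} du denotes the lower incomplete gamma function. -/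

import Mathlib

/-!
Given `N = n`, the events `γᵢ ≤ x` for `i < n` are independent with a common probability `p`, so
the outage probability is the Poisson generating function `E[p^N] = exp(-λπD²(1 - p))`.
For a single user, `E ~ Exp(1)` gives `P(γ > x | R, S) = exp(-x R^α/ρ) exp(-x S)`; averaging over
`S ~ Gamma(M - 1, 1)` gives the factor `(1 + x)^(1 - M)`, and averaging over `R`, whose density
is `2r/D²` on `(0, D]`, gives `1 - p = (1 + x)^(1 - M) (2/D²) ∫₀ᴰ r exp(-x r^α/ρ) dr`.
The substitution `u = x r^α / ρ` turns the last integral into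
`(1/α) (ρ/x)^(2/α) γ_inc(2/α, x D^α/ρ)`.
-/

open MeasureTheory ProbabilityTheory Real Set
open scoped NNReal ENNReal

theorem image_const_mul_rpow_Ioc {c α D : ℝ} (hc : 0 < c) (hα : 0 < α) (hD : 0 ≤ D) :
    (fun r => c * r ^ α) '' Ioc 0 D = Ioc 0 (c * D ^ α) := by
  ext u
  constructor
  · rintro ⟨r, ⟨hr0, hrD⟩, rfl⟩
    exact ⟨by positivity, by dsimp only; gcongr⟩
  · rintro ⟨hu0, huD⟩
    have huc : 0 ≤ u / c := by positivity
    refine ⟨(u / c) ^ α⁻¹, ⟨by positivity, ?_⟩, ?_⟩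
    · rw [rpow_inv_le_iff_of_pos huc hD hα, div_le_iff₀' hc]
      exact huD
    · dsimp only
      rw [rpow_inv_rpow huc hα.ne']
      field_simp

theorem integral_rpow_mul_exp_neg_eq_integral_mul_exp_neg_rpow {c α D : ℝ} (hc : 0 < c)
    (hα : 0 < α) (hD : 0 ≤ D) :
    ∫ u in (0 : ℝ)..c * D ^ α, u ^ (2 / α - 1) * exp (-u)
      = α * c ^ (2 / α) * ∫ r in Ioc 0 D, r * exp (-(c * r ^ α)) := by
  have hderiv : ∀ r ∈ Ioc (0 : ℝ) D,
      HasDerivWithinAt (fun r => c * r ^ α) (c * (α * r ^ (α - 1))) (Ioc 0 D) r :=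
    fun r hr => ((hasDerivAt_rpow_const (Or.inl hr.1.ne')).const_mul c).hasDerivWithinAt
  have hinj : InjOn (fun r : ℝ => c * r ^ α) (Ioc 0 D) := fun r hr s hs h =>
    (rpow_left_injOn hα.ne').eq_iff hr.1.le hs.1.le |>.mp (mul_left_cancel₀ hc.ne' h)
  rw [intervalIntegral.integral_of_le (by positivity), ← image_const_mul_rpow_Ioc hc hα hD,
    integral_image_eq_integral_abs_deriv_smul measurableSet_Ioc hderiv hinj,
    ← integral_const_mul]
  refine setIntegral_congr_fun measurableSet_Ioc fun r hr => ?_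
  have hr : 0 < r := hr.1
  have hpow : (c * r ^ α) ^ (2 / α - 1) = c ^ (2 / α - 1) * r ^ (2 - α) := by
    rw [mul_rpow hc.le (by positivity), ← rpow_mul hr.le]
    congr 2
    field_simp
  have hc' : c * c ^ (2 / α - 1) = c ^ (2 / α) := by
    rw [← rpow_one_add' hc.le (by ring_nf; positivity)]; ring_nf
  have hr' : r ^ (α - 1) * r ^ (2 - α) = r := by
    rw [← rpow_add hr]; norm_num
  rw [smul_eq_mul, abs_of_pos (by positivity), hpow]
  calc _ = α * (c * c ^ (2 / α - 1)) * (r ^ (α - 1) * r ^ (2 - α)) * exp (-(c * r ^ α)) := by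
        ring
    _ = _ := by rw [hc', hr']; ring

theorem setIntegral_mul_exp_neg_mul_rpow_eq {c α D : ℝ} (hc : 0 < c) (hα : 0 < α) (hD : 0 ≤ D) :
    ∫ r in Ioc 0 D, r * exp (-(c * r ^ α))
      = c⁻¹ ^ (2 / α) / α * ∫ u in (0 : ℝ)..c * D ^ α, u ^ (2 / α - 1) * exp (-u) := by
  rw [integral_rpow_mul_exp_neg_eq_integral_mul_exp_neg_rpow hc hα hD, inv_rpow hc.le]
  have : c ^ (2 / α) ≠ 0 := (rpow_pos_of_pos hc _).ne'
  field_simp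

namespace ProbabilityTheory

variable {Ω : Type*} {mΩ : MeasurableSpace Ω} {P : Measure Ω}

theorem hasSum_poissonMeasure_real_mul_pow (r : ℝ≥0) (p : ℝ) :
    HasSum (fun n => (poissonMeasure r).real {n} * p ^ n) (exp (-(r * (1 - p)))) := by
  convert! (NormedSpace.expSeries_div_hasSum_exp ((r : ℝ) * p)).mul_left (exp (-r)) using 1
  · ext n
    rw [poissonMeasure_real_singleton, mul_pow]
    ring
  · rw [← exp_eq_exp_ℝ, ← exp_add]
    ring_nf

theorem measureReal_forall_lt_of_poisson [IsProbabilityMeasure P] {N : Ω → ℕ} (hNm : Measurable N)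
    {r : ℝ≥0} (hN : P.map N = poissonMeasure r) {m : MeasurableSpace Ω} (hm : m ≤ mΩ)
    (hNind : Indep (MeasurableSpace.comap N inferInstance) m P) {C : ℕ → Set Ω}
    (hCm : ∀ i, MeasurableSet[m] (C i)) (hC : iIndepSet C P) {p : ℝ}
    (hp : ∀ i, P.real (C i) = p) :
    P.real {ω | ∀ i < N ω, ω ∈ C i} = exp (-(r * (1 - p))) := by
  have hp0 : 0 ≤ p := hp 0 ▸ measureReal_nonneg
  have hsplit : {ω | ∀ i < N ω, ω ∈ C i} = ⋃ n, N ⁻¹' {n} ∩ ⋂ i ∈ Finset.range n, C i := by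
    ext ω
    simp
  have hprefix : ∀ n, MeasurableSet[m] (⋂ i ∈ Finset.range n, C i) := fun n =>
    Finset.measurableSet_biInter _ fun i _ => hCm i
  have hterm : ∀ n, P (N ⁻¹' {n} ∩ ⋂ i ∈ Finset.range n, C i)
      = ENNReal.ofReal ((poissonMeasure r).real {n} * p ^ n) := fun n => by
    rw [(Indep_iff _ _ _).1 hNind _ _ ⟨{n}, measurableSet_singleton n, rfl⟩ (hprefix n),
      hC.meas_biInter, ← Measure.map_apply hNm (measurableSet_singleton n), hN,
      ENNReal.ofReal_mul measureReal_nonneg, ofReal_measureReal, ENNReal.ofReal_pow hp0]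
    have hPC : ∀ i, P (C i) = ENNReal.ofReal p := fun i => by rw [← hp i, ofReal_measureReal]
    simp only [hPC, Finset.prod_const, Finset.card_range]
  have hsum := hasSum_poissonMeasure_real_mul_pow r p
  rw [hsplit, measureReal_def, measure_iUnion ?_ ?_, tsum_congr hterm,
    ← ENNReal.ofReal_tsum_of_nonneg (fun n => by positivity) hsum.summable, hsum.tsum_eq,
    ENNReal.toReal_ofReal (exp_pos _).le]
  · exact fun k n hkn => Set.disjoint_left.2 fun ω hk hn => hkn (hk.1.symm.trans hn.1)
  · exact fun n => (hNm (measurableSet_singleton n)).inter (hm _ (hprefix n))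

theorem iIndepFun.map_prodMk_prodMk_eq_prod {β : Type*} [MeasurableSpace β] {X Y Z : Ω → β}
    (h : iIndepFun ![X, Y, Z] P) (hX : Measurable X) (hY : Measurable Y) (hZ : Measurable Z) :
    P.map (fun ω => (X ω, Y ω, Z ω)) = (P.map X).prod ((P.map Y).prod (P.map Z)) := by
  have := h.isProbabilityMeasure
  have hm : ∀ j, Measurable (![X, Y, Z] j) := by
    intro j; fin_cases j <;> assumption
  have hYZ : IndepFun Y Z P := h.indepFun (i := 1) (j := 2) (by decide)
  have hXYZ : IndepFun X (fun ω => (Y ω, Z ω)) P :=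
    (h.indepFun_prodMk hm 1 2 0 (by decide) (by decide)).symm
  rw [(indepFun_iff_map_prod_eq_prod_map_map hX.aemeasurable
      (hY.prodMk hZ).aemeasurable).1 hXYZ,
    (indepFun_iff_map_prod_eq_prod_map_map hY.aemeasurable hZ.aemeasurable).1 hYZ]

theorem iIndepFun.iIndepSet_preimage_curry {ι κ β : Type*} [MeasurableSpace β]
    {f : ι × κ → Ω → β} (hf : iIndepFun f P) (hfm : ∀ p, Measurable (f p))
    {B : ι → Set (κ → β)} (hB : ∀ i, MeasurableSet (B i)) :
    iIndepSet (fun i => (fun ω j => f (i, j) ω) ⁻¹' B i) P := by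
  set m : ι × κ → MeasurableSpace Ω := fun p => MeasurableSpace.comap (f p) inferInstance
  have hblock : ∀ (S : Set (ι × κ)) i, (∀ j, (i, j) ∈ S) →
      MeasurableSet[⨆ p ∈ S, m p] ((fun ω j => f (i, j) ω) ⁻¹' B i) := by
    intro S i hS
    have hg : Measurable[⨆ p ∈ S, m p] (fun ω j => f (i, j) ω) :=
      @measurable_pi_lambda _ _ _ (⨆ p ∈ S, m p) _ _ fun j => (comap_measurable (f (i, j))).mono
        (le_iSup₂ (f := fun p (_ : p ∈ S) => m p) (i, j) (hS j)) le_rfl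
    exact hg (hB i)
  rw [iIndepSet_iff_meas_biInter fun i =>
    measurable_pi_iff.2 (fun j => hfm (i, j)) (hB i)]
  have := hf.isProbabilityMeasure
  classical
  intro s
  induction s using Finset.induction_on with
  | empty => simp
  | insert a s ha ih =>
    have hindep := indep_iSup_of_disjoint (fun p => (hfm p).comap_le) hf.iIndep
      (S := {p | p.1 = a}) (T := {p | p.1 ∈ s})
      (Set.disjoint_left.2 fun p hpa hps => ha (hpa ▸ hps))
    rw [Finset.set_biInter_insert, Finset.prod_insert ha, ← ih]
    exact (Indep_iff _ _ _).1 hindep _ _ (hblock _ a fun _ => rfl)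
      (Finset.measurableSet_biInter s fun i hi => hblock _ i fun _ => hi)

theorem expMeasure_Ioi {r t : ℝ} (hr : 0 < r) (ht : 0 ≤ t) :
    expMeasure r (Ioi t) = ENNReal.ofReal (exp (-(r * t))) := by
  have := isProbabilityMeasure_expMeasure hr
  rw [← compl_Iic, prob_compl_eq_one_sub measurableSet_Iic, ← ofReal_cdf,
    cdf_expMeasure_eq hr, if_pos ht, ← ENNReal.ofReal_one,
    ← ENNReal.ofReal_sub _ (sub_nonneg.2 (exp_le_one_iff.2 (by nlinarith))), sub_sub_cancel]

theorem lintegral_exp_neg_mul_gammaMeasure {a r x : ℝ} (ha : 0 < a) (hr : 0 < r) (hx : 0 ≤ x) :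
    ∫⁻ s, ENNReal.ofReal (exp (-(x * s))) ∂gammaMeasure a r
      = ENNReal.ofReal ((r / (r + x)) ^ a) := by
  have hrx : 0 < r + x := by linarith
  have hpdf : ∀ s, gammaPDF a r s * ENNReal.ofReal (exp (-(x * s)))
      = ENNReal.ofReal ((r / (r + x)) ^ a) * gammaPDF a (r + x) s := by
    intro s
    rcases lt_or_ge s 0 with hs | hs
    · simp [gammaPDF_of_neg hs]
    rw [gammaPDF_of_nonneg hs, gammaPDF_of_nonneg hs, ← ENNReal.ofReal_mul (by positivity),
      ← ENNReal.ofReal_mul (by positivity), div_rpow hr.le hrx.le,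
      show -((r + x) * s) = -(r * s) + -(x * s) by ring, exp_add]
    field_simp
  have hmeas (b : ℝ) : Measurable (gammaPDF a b) := (measurable_gammaPDFReal a b).ennreal_ofReal
  rw [gammaMeasure, lintegral_withDensity_eq_lintegral_mul _ (hmeas r) (by fun_prop)]
  simp only [Pi.mul_apply, hpdf]
  rw [lintegral_const_mul _ (hmeas (r + x)), lintegral_gammaPDF_eq_one ha hrx, mul_one]

theorem ae_nonneg_gammaMeasure (a r : ℝ) : ∀ᵐ s ∂gammaMeasure a r, 0 ≤ s := by
  rw [ae_iff, show {s : ℝ | ¬0 ≤ s} = Iio 0 by ext; simp, gammaMeasure,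
    withDensity_apply _ measurableSet_Iio]
  exact lintegral_gammaPDF_of_nonpos le_rfl

theorem expMeasure_prod_gammaMeasure_sinr_gt {a c x : ℝ} (ha : 0 < a) (hc : 0 < c) (hx : 0 ≤ x) :
    (expMeasure 1).prod (gammaMeasure a 1) {es | x < es.1 / (c + es.2)}
      = ENNReal.ofReal (exp (-(x * c))) * ENNReal.ofReal ((1 / (1 + x)) ^ a) := by
  have := isProbabilityMeasure_expMeasure one_pos
  have := isProbabilityMeasure_gammaMeasure ha one_pos
  have hm : MeasurableSet {es : ℝ × ℝ | x < es.1 / (c + es.2)} :=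
    measurableSet_lt measurable_const (by fun_prop)
  rw [Measure.prod_apply_symm hm, ← lintegral_exp_neg_mul_gammaMeasure ha one_pos hx,
    ← lintegral_const_mul' _ _ ENNReal.ofReal_ne_top]
  refine lintegral_congr_ae ?_
  filter_upwards [ae_nonneg_gammaMeasure a 1] with s hs
  have hcs : (fun e => (e, s)) ⁻¹' {es : ℝ × ℝ | x < es.1 / (c + es.2)} = Ioi (x * (c + s)) := by
    ext e
    simp [lt_div_iff₀ (by linarith : 0 < c + s)]
  rw [hcs, expMeasure_Ioi one_pos (by positivity), ← ENNReal.ofReal_mul (exp_pos _).le,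
    ← exp_add]
  ring_nf

/-- The law of the distance to the centre of a uniform random point of a disc of radius `D`. -/
noncomputable def diskRadiusMeasure (D : ℝ) : Measure ℝ :=
  (volume.restrict (Ioc 0 D)).withDensity fun r => ENNReal.ofReal (2 * r / D ^ 2)

theorem setLIntegral_diskRadiusDensity {D t : ℝ} (hD : 0 < D) (ht : 0 ≤ t) :
    ∫⁻ r in Ioc 0 t, ENNReal.ofReal (2 * r / D ^ 2) = ENNReal.ofReal ((t / D) ^ 2) := by
  rw [← ofReal_integral_eq_lintegral_ofReal (by fun_prop : Continuous _).integrableOn_Ioc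
      ((ae_restrict_iff' measurableSet_Ioc).2 (ae_of_all _ fun r hr => by
        have := hr.1; positivity)),
    ← intervalIntegral.integral_of_le ht, intervalIntegral.integral_div,
    intervalIntegral.integral_const_mul, integral_id]
  congr 1
  field_simp
  ring

theorem diskRadiusMeasure_Iic {D t : ℝ} (hD : 0 < D) (ht : 0 ≤ t) (htD : t ≤ D) :
    diskRadiusMeasure D (Iic t) = ENNReal.ofReal ((t / D) ^ 2) := by
  rw [diskRadiusMeasure, withDensity_apply _ measurableSet_Iic,
    Measure.restrict_restrict measurableSet_Iic, Iic_inter_Ioc_of_le htD,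
    setLIntegral_diskRadiusDensity hD ht]

theorem isProbabilityMeasure_diskRadiusMeasure {D : ℝ} (hD : 0 < D) :
    IsProbabilityMeasure (diskRadiusMeasure D) := by
  constructor
  rw [diskRadiusMeasure, withDensity_apply _ MeasurableSet.univ, Measure.restrict_univ,
    setLIntegral_diskRadiusDensity hD hD.le, div_self hD.ne', one_pow, ENNReal.ofReal_one]

theorem _root_.MeasureTheory.Measure.ext_of_Iic_of_mem_Icc {μ ν : Measure ℝ}
    [IsProbabilityMeasure μ] [IsProbabilityMeasure ν] {a b : ℝ} (hab : a ≤ b)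
    (h : ∀ t ∈ Icc a b, μ (Iic t) = ν (Iic t))
    (ha : μ (Iic a) = 0) (hb : μ (Iic b) = 1) : μ = ν := by
  have ha' : ν (Iic a) = 0 := h a ⟨le_rfl, hab⟩ ▸ ha
  have hb' : ν (Iic b) = 1 := h b ⟨hab, le_rfl⟩ ▸ hb
  refine Measure.ext_of_Iic μ ν fun t => ?_
  rcases lt_or_ge t a with hta | hat
  · rw [measure_mono_null (Iic_subset_Iic.2 hta.le) ha,
      measure_mono_null (Iic_subset_Iic.2 hta.le) ha']
  rcases le_or_gt t b with htb | hbt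
  · exact h t ⟨hat, htb⟩
  · rw [one_le_prob_iff.1 (hb ▸ measure_mono (Iic_subset_Iic.2 hbt.le)),
      one_le_prob_iff.1 (hb' ▸ measure_mono (Iic_subset_Iic.2 hbt.le))]

theorem map_eq_diskRadiusMeasure [IsProbabilityMeasure P] {D : ℝ} (hD : 0 < D) {X : Ω → ℝ}
    (hX : Measurable X) (hcdf : ∀ r ∈ Icc 0 D, (P {ω | X ω ≤ r}).toReal = (r / D) ^ 2) :
    P.map X = diskRadiusMeasure D := by
  have := Measure.isProbabilityMeasure_map (μ := P) hX.aemeasurable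
  have := isProbabilityMeasure_diskRadiusMeasure hD
  have hIic : ∀ t ∈ Icc 0 D, P.map X (Iic t) = ENNReal.ofReal ((t / D) ^ 2) := fun t ht => by
    rw [Measure.map_apply hX measurableSet_Iic, ← hcdf t ht,
      ENNReal.ofReal_toReal (measure_ne_top _ _)]
    rfl
  refine Measure.ext_of_Iic_of_mem_Icc hD.le
    (fun t ht => (hIic t ht).trans (diskRadiusMeasure_Iic hD ht.1 ht.2).symm) ?_ ?_
  · simpa using hIic 0 ⟨le_rfl, hD.le⟩
  · simpa [div_self hD.ne'] using hIic D ⟨hD.le, le_rfl⟩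

theorem diskRadiusMeasure_prod_sinr_gt {a x ρ D α : ℝ} (ha : 0 < a) (hx : 0 ≤ x) (hρ : 0 < ρ)
    (hα : 0 ≤ α) :
    (diskRadiusMeasure D).prod ((expMeasure 1).prod (gammaMeasure a 1))
        {p : ℝ × ℝ × ℝ | x < p.2.1 / (p.1 ^ α / ρ + p.2.2)}
      = ENNReal.ofReal ((1 / (1 + x)) ^ a * (2 / D ^ 2) *
          ∫ r in Ioc 0 D, r * exp (-(x / ρ * r ^ α))) := by
  have := isProbabilityMeasure_expMeasure one_pos
  have := isProbabilityMeasure_gammaMeasure ha one_pos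
  have hm : MeasurableSet {p : ℝ × ℝ × ℝ | x < p.2.1 / (p.1 ^ α / ρ + p.2.2)} :=
    measurableSet_lt measurable_const (by fun_prop)
  have hslice : ∀ r ∈ Ioc 0 D, ENNReal.ofReal (2 * r / D ^ 2) *
      (expMeasure 1).prod (gammaMeasure a 1)
        (Prod.mk r ⁻¹' {p : ℝ × ℝ × ℝ | x < p.2.1 / (p.1 ^ α / ρ + p.2.2)})
      = ENNReal.ofReal ((1 / (1 + x)) ^ a * (2 / D ^ 2)) *
          ENNReal.ofReal (r * exp (-(x / ρ * r ^ α))) := fun r hr => by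
    have hr : 0 < r := hr.1
    rw [show Prod.mk r ⁻¹' {p : ℝ × ℝ × ℝ | x < p.2.1 / (p.1 ^ α / ρ + p.2.2)}
        = {es | x < es.1 / (r ^ α / ρ + es.2)} from rfl,
      expMeasure_prod_gammaMeasure_sinr_gt ha (by positivity) hx,
      ← ENNReal.ofReal_mul (by positivity), ← ENNReal.ofReal_mul (by positivity),
      ← ENNReal.ofReal_mul (by positivity)]
    congr 1
    ring_nf
  have hint : IntegrableOn (fun r => r * exp (-(x / ρ * r ^ α))) (Ioc 0 D) := by
    have := continuous_rpow_const hα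
    exact (by fun_prop : Continuous fun r : ℝ => r * exp (-(x / ρ * r ^ α))).integrableOn_Ioc
  have hnonneg : 0 ≤ᵐ[volume.restrict (Ioc 0 D)] fun r => r * exp (-(x / ρ * r ^ α)) :=
    (ae_restrict_iff' measurableSet_Ioc).2 (ae_of_all _ fun r hr => by have := hr.1; positivity)
  rw [Measure.prod_apply hm, diskRadiusMeasure,
    lintegral_withDensity_eq_lintegral_mul _ (by fun_prop) (measurable_measure_prodMk_left hm)]
  simp only [Pi.mul_apply]
  rw [setLIntegral_congr_fun measurableSet_Ioc hslice,
    lintegral_const_mul' _ _ ENNReal.ofReal_ne_top,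
    ← ofReal_integral_eq_lintegral_ofReal hint hnonneg, ← ENNReal.ofReal_mul (by positivity)]

theorem measureReal_sinr_le [IsProbabilityMeasure P] {R E S : Ω → ℝ} (hR : Measurable R)
    (hE : Measurable E) (hS : Measurable S) {a x ρ D α : ℝ} (ha : 0 < a) (hx : 0 ≤ x)
    (hρ : 0 < ρ) (hα : 0 ≤ α)
    (hRlaw : P.map R = diskRadiusMeasure D) (hElaw : P.map E = expMeasure 1)
    (hSlaw : P.map S = gammaMeasure a 1) (hind : iIndepFun ![R, E, S] P) :
    P.real {ω | E ω / (R ω ^ α / ρ + S ω) ≤ x}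
      = 1 - (1 / (1 + x)) ^ a * (2 / D ^ 2) * ∫ r in Ioc 0 D, r * exp (-(x / ρ * r ^ α)) := by
  set A := {p : ℝ × ℝ × ℝ | x < p.2.1 / (p.1 ^ α / ρ + p.2.2)}
  have hA : MeasurableSet A := measurableSet_lt measurable_const (by fun_prop)
  have hT : Measurable fun ω => (R ω, E ω, S ω) := hR.prodMk (hE.prodMk hS)
  have hcompl : {ω | E ω / (R ω ^ α / ρ + S ω) ≤ x} = ((fun ω => (R ω, E ω, S ω)) ⁻¹' A)ᶜ := by
    ext ω
    simp [A]
  have hint : 0 ≤ ∫ r in Ioc 0 D, r * exp (-(x / ρ * r ^ α)) :=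
    setIntegral_nonneg measurableSet_Ioc fun r hr => by have := hr.1; positivity
  rw [hcompl, probReal_compl_eq_one_sub (hT hA), measureReal_def, ← Measure.map_apply hT hA,
    hind.map_prodMk_prodMk_eq_prod hR hE hS, hRlaw, hElaw, hSlaw,
    diskRadiusMeasure_prod_sinr_gt ha hx hρ hα, ENNReal.toReal_ofReal (by positivity)]

end ProbabilityTheory

/-- Lemma 1 (beam outage probability, unbounded path loss `G(d) = d^{-α}`). With a Poisson
number `N` of users (mean `λπD²`), i.i.d. distances `R i` with CDF `(r/D)²` on `[0,D]`,
i.i.d. `Exp(1)` signal powers and i.i.d. `Gamma(M-1,1)` interference powers, all mutually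
independent and independent of `N`, the probability that all beam SINRs
`E i / (R i^α / ρ + S i)` are at most `x` equals
`exp(-(2λπ/α) (x+1)^{1-M} (ρ/x)^{2/α} γ_inc(2/α, x D^α / ρ))`. -/
theorem beam_outage_probability_unbounded
    {Ω : Type*} [MeasurableSpace Ω] (P : Measure Ω) [IsProbabilityMeasure P]
    (M : ℕ) (hM : 2 ≤ M) (lam ρ D α : ℝ) (hlam : 0 < lam) (hρ : 0 < ρ) (hD : 0 < D)
    (hα : 2 < α)
    (N : Ω → ℕ) (hNm : Measurable N)
    (hN : P.map N = poissonMeasure ((lam * π * D ^ 2).toNNReal))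
    (R E S : ℕ → Ω → ℝ)
    (hRm : ∀ i, Measurable (R i)) (hEm : ∀ i, Measurable (E i)) (hSm : ∀ i, Measurable (S i))
    (hR : ∀ i, ∀ r ∈ Set.Icc (0 : ℝ) D, (P {ω | R i ω ≤ r}).toReal = (r / D) ^ 2)
    (hE : ∀ i, P.map (E i) = expMeasure 1)
    (hS : ∀ i, P.map (S i) = gammaMeasure ((M : ℝ) - 1) 1)
    (hiid : iIndepFun
        (fun (p : ℕ × Fin 3) => ![R p.1, E p.1, S p.1] p.2) P)
    (hNind : IndepFun N (fun ω (p : ℕ × Fin 3) => ![R p.1, E p.1, S p.1] p.2 ω) P) :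
    ∀ x : ℝ, 0 < x →
      (P {ω | ∀ i < N ω, E i ω / (R i ω ^ α / ρ + S i ω) ≤ x}).toReal
        = Real.exp (-(2 * lam * π / α) * (x + 1) ^ ((1 : ℝ) - M) * (ρ / x) ^ (2 / α) *
            ∫ u in (0 : ℝ)..(x * D ^ α / ρ), u ^ (2 / α - 1) * Real.exp (-u)) := by
  intro x hx
  have hα0 : 0 < α := by linarith
  have hM' : (2 : ℝ) ≤ M := by exact_mod_cast hM
  have ha : (0 : ℝ) < M - 1 := by linarith
  set f : ℕ × Fin 3 → Ω → ℝ := fun p => ![R p.1, E p.1, S p.1] p.2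
  have hfm : ∀ p, Measurable (f p) := fun ⟨i, j⟩ => by
    fin_cases j
    exacts [hRm i, hEm i, hSm i]
  let C : ℕ → Set Ω := fun i => {ω | E i ω / (R i ω ^ α / ρ + S i ω) ≤ x}
  have hCind : iIndepSet C P :=
    hiid.iIndepSet_preimage_curry hfm (B := fun _ => {v | v 1 / (v 0 ^ α / ρ + v 2) ≤ x})
      fun _ => measurableSet_le (by fun_prop) measurable_const
  have hCm : ∀ i, MeasurableSet[MeasurableSpace.comap (fun ω p => f p ω) inferInstance] (C i) :=
    fun i => ⟨{g | g (i, 1) / (g (i, 0) ^ α / ρ + g (i, 2)) ≤ x},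
      measurableSet_le (by fun_prop) measurable_const, rfl⟩
  have hC : ∀ i, P.real (C i) = 1 - (1 / (1 + x)) ^ ((M : ℝ) - 1) * (2 / D ^ 2) *
      ∫ r in Ioc 0 D, r * exp (-(x / ρ * r ^ α)) :=
    fun i => measureReal_sinr_le (hRm i) (hEm i) (hSm i) ha hx.le hρ hα0.le
      (map_eq_diskRadiusMeasure hD (hRm i) (hR i)) (hE i) (hS i)
      (hiid.precomp (g := Prod.mk i) (Prod.mk_right_injective i))
  rw [← measureReal_def]
  refine (measureReal_forall_lt_of_poisson hNm hN (measurable_pi_lambda _ hfm).comap_le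
    ((IndepFun_iff_Indep _ _ _).1 hNind) hCm hCind hC).trans ?_
  have hpow : (x + 1) ^ ((1 : ℝ) - M) = (1 / (1 + x)) ^ ((M : ℝ) - 1) := by
    rw [one_div, inv_rpow (by positivity), ← rpow_neg (by positivity), add_comm, neg_sub]
  rw [Real.coe_toNNReal _ (by positivity),
    setIntegral_mul_exp_neg_mul_rpow_eq (div_pos hx hρ) hα0 hD.le, inv_div,
    show x / ρ * D ^ α = x * D ^ α / ρ by ring, hpow]
  congr 1
  field_simp
  ring
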